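/- arXiv:2112.12639 — 6 statements merged into one kernel-verified Lean document; each statement's English description precedes it below -/
import Mathlib

section
/- Let a CRN have stoichiometric subspace S = span{ y'_j - y_j : j ∈ {1,...,r} } ⊆ ℝ^m, and let a partition of reactions into p blocks induce subnetwork stoichiometric subspaces S_i. If the decomposition is independent, i.e. S = S_1 ⊕ ... ⊕ S_p (direct sum), and K is any kinetics, then E_+(N, K) = ⋂_i E_+(N_i, K_i), i.e., x ∈ ℝ^m_{>0} satisfies N K(x) = 0 if and only if N_i K_i(x) = 0 for all i. -/
/-- Feinberg Decomposition Theorem: for an independent decomposition (the stoichiometric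
subspace is the internal direct sum of the subnetworks' stoichiometric subspaces) and any
kinetics, `E_+(N,K) = ⋂ E_+(N_i,K_i)`. -/
theorem stmt_3 {m r p : ℕ} (y y' : Fin r → (Fin m → ℝ)) (part : Fin r → Fin p)
    (S : Fin p → Submodule ℝ (Fin m → ℝ))
    (hS : ∀ i, S i = Submodule.span ℝ {v | ∃ j, part j = i ∧ v = y' j - y j})
    (hindep : iSupIndep S)
    (hsum : (⨆ i, S i) = Submodule.span ℝ {v | ∃ j, v = y' j - y j})
    (N : (Fin r → ℝ) →ₗ[ℝ] (Fin m → ℝ))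
    (hN : ∀ v, N v = ∑ j, v j • (y' j - y j))
    (K : (Fin m → ℝ) → (Fin r → ℝ)) (x : Fin m → ℝ) (hpos : ∀ i, 0 < x i) :
    N (K x) = 0 ↔ ∀ i : Fin p, N (fun j => if part j = i then K x j else 0) = 0 := by
  set f : Fin p → (Fin m → ℝ) := fun i => N (fun j => if part j = i then K x j else 0) with hf
  have hmem : ∀ i, f i ∈ S i := by
    intro i
    show N (fun j => if part j = i then K x j else 0) ∈ S i
    rw [hN, hS]
    apply Submodule.sum_mem
    intro j _
    by_cases h : part j = i
    · simp only [h, if_pos]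
      exact Submodule.smul_mem _ _ (Submodule.subset_span ⟨j, h, rfl⟩)
    · simp [h]
  have hsumf : ∑ i, f i = N (K x) := by
    simp only [hf, hN]
    rw [Finset.sum_comm]
    refine Finset.sum_congr rfl fun j _ => ?_
    rw [← Finset.sum_smul]
    congr 1
    simp
  constructor
  · intro h0 i
    have hzero : ∑ i, f i = 0 := by rw [hsumf, h0]
    have h1' : f i + ∑ j ∈ Finset.univ.erase i, f j = 0 := by
      rw [Finset.add_sum_erase _ f (Finset.mem_univ i)]; exact hzero
    have h1 : f i = -∑ j ∈ Finset.univ.erase i, f j := eq_neg_of_add_eq_zero_left h1'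
    have h2 : f i ∈ ⨆ j, ⨆ _ : j ≠ i, S j := by
      rw [h1]
      refine Submodule.neg_mem _ (Submodule.sum_mem _ fun j hj => ?_)
      have hji : j ≠ i := Finset.ne_of_mem_erase hj
      exact Submodule.mem_iSup_of_mem j (Submodule.mem_iSup_of_mem hji (hmem j))
    exact (hindep i).le_bot ⟨hmem i, h2⟩
  · intro h
    rw [← hsumf]
    exact Finset.sum_eq_zero fun i _ => h i
end

section
/- If a decomposition of a CRN into subnetworks N_1, ..., N_p is independent (the stoichiometric subspace S is the direct sum of the subnetwork stoichiometric subspaces S_i), then the deficiency satisfies δ ≤ δ_1 + δ_2 + ... + δ_p. -/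
open Module Submodule

lemma aux_finrank_iSup_le_sum {K V : Type*} [Field K] [AddCommGroup V] [Module K V]
    [FiniteDimensional K V] {ι : Type*} [DecidableEq ι] (s : Finset ι) (W : ι → Submodule K V) :
    finrank K ↑(⨆ i ∈ s, W i) ≤ ∑ i ∈ s, finrank K (W i) := by
  induction s using Finset.induction with
  | empty => simp
  | @insert a s ha ih =>
    rw [Finset.sum_insert ha, Finset.iSup_insert]
    have h1 := Submodule.finrank_sup_add_finrank_inf_eq (W a) (⨆ i ∈ s, W i)
    omega

lemma aux_le_univ {K V : Type*} [Field K] [AddCommGroup V] [Module K V]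
    [FiniteDimensional K V] {ι : Type*} [Fintype ι] [DecidableEq ι] (W : ι → Submodule K V) :
    finrank K ↑(⨆ i, W i) ≤ ∑ i, finrank K (W i) := by
  have h := aux_finrank_iSup_le_sum Finset.univ W
  rwa [show (⨆ i ∈ Finset.univ, W i) = ⨆ i, W i from
    iSup_congr fun i => iSup_pos (Finset.mem_univ i)] at h

lemma aux_finrank_iSup_eq_sum {K V : Type*} [Field K] [AddCommGroup V] [Module K V]
    [FiniteDimensional K V] {ι : Type*} [DecidableEq ι] {W : ι → Submodule K V}
    (hW : iSupIndep W) (s : Finset ι) :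
    finrank K ↑(⨆ i ∈ s, W i) = ∑ i ∈ s, finrank K (W i) := by
  induction s using Finset.induction with
  | empty => simp
  | @insert a s ha ih =>
    rw [Finset.sum_insert ha, Finset.iSup_insert, ← ih]
    have hdisj : Disjoint (W a) (⨆ i ∈ s, W i) := by
      refine (hW a).mono_right ?_
      refine iSup₂_le fun i hi => ?_
      exact le_iSup₂ (f := fun i (_ : i ≠ a) => W i) i (fun h => ha (h ▸ hi))
    have h1 := Submodule.finrank_sup_add_finrank_inf_eq (W a) (⨆ i ∈ s, W i)
    rw [hdisj.eq_bot] at h1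
    simp only [finrank_bot, add_zero] at h1
    omega

/-- If a decomposition of a CRN is independent (the stoichiometric subspace is the direct sum
of the subnetworks' stoichiometric subspaces), then `δ ≤ δ_1 + ⋯ + δ_p`, where the deficiency
is expressed as `δ = rank I_a - rank N` (using `n - ℓ = rank I_a` and `s = rank N`). -/
theorem stmt_4 {m n r p : ℕ}
    (Ia : (Fin r → ℝ) →ₗ[ℝ] (Fin n → ℝ)) (Y : (Fin n → ℝ) →ₗ[ℝ] (Fin m → ℝ))
    (part : Fin r → Fin p)
    (R : Fin p → ((Fin r → ℝ) →ₗ[ℝ] (Fin r → ℝ)))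
    (hR : ∀ i v j, R i v j = if part j = i then v j else 0)
    (hindep : iSupIndep (fun i => LinearMap.range ((Y ∘ₗ Ia) ∘ₗ R i)))
    (hsum : (⨆ i, LinearMap.range ((Y ∘ₗ Ia) ∘ₗ R i)) = LinearMap.range (Y ∘ₗ Ia)) :
    ((Module.finrank ℝ (LinearMap.range Ia) : ℤ)
        - (Module.finrank ℝ (LinearMap.range (Y ∘ₗ Ia)) : ℤ))
      ≤ ∑ i : Fin p, ((Module.finrank ℝ (LinearMap.range (Ia ∘ₗ R i)) : ℤ)
        - (Module.finrank ℝ (LinearMap.range ((Y ∘ₗ Ia) ∘ₗ R i)) : ℤ)) := by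
  classical
  -- ∑ i, R i = id
  have hid : ∀ v : Fin r → ℝ, ∑ i : Fin p, R i v = v := by
    intro v
    funext j
    rw [Finset.sum_apply]
    simp only [hR]
    rw [Finset.sum_ite_eq (Finset.univ) (part j) (fun _ => v j)]
    simp
  -- range Ia ≤ ⨆ range (Ia ∘ R i)
  have hle : LinearMap.range Ia ≤ ⨆ i, LinearMap.range (Ia ∘ₗ R i) := by
    rintro y ⟨v, rfl⟩
    have : Ia v = ∑ i : Fin p, Ia (R i v) := by
      rw [← map_sum, hid]
    rw [this]
    refine Submodule.sum_mem _ fun i _ => ?_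
    exact Submodule.mem_iSup_of_mem i ⟨v, rfl⟩
  have h1 : finrank ℝ (LinearMap.range Ia) ≤
      ∑ i : Fin p, finrank ℝ (LinearMap.range (Ia ∘ₗ R i)) := by
    calc finrank ℝ (LinearMap.range Ia)
        ≤ finrank ℝ ↑(⨆ i, LinearMap.range (Ia ∘ₗ R i)) := Submodule.finrank_mono hle
      _ ≤ _ := aux_le_univ _
  have h2 : finrank ℝ (LinearMap.range (Y ∘ₗ Ia)) =
      ∑ i : Fin p, finrank ℝ (LinearMap.range ((Y ∘ₗ Ia) ∘ₗ R i)) := by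
    rw [← hsum]
    have h := aux_finrank_iSup_eq_sum hindep Finset.univ
    rwa [show (⨆ i ∈ Finset.univ, LinearMap.range ((Y ∘ₗ Ia) ∘ₗ R i)) = ⨆ i, LinearMap.range ((Y ∘ₗ Ia) ∘ₗ R i) from
      iSup_congr fun i => iSup_pos (Finset.mem_univ i)] at h
  rw [Finset.sum_sub_distrib, h2]
  push_cast
  have := Int.ofNat_le.mpr h1
  push_cast at this
  linarith
end

section
/- If a decomposition of a CRN into subnetworks N_1, ..., N_p is incidence independent, i.e. n − ℓ = Σ_i (n_i − ℓ_i), then the deficiency satisfies δ ≥ δ_1 + δ_2 + ... + δ_p. -/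
/-!
Every reaction lies in exactly one subnetwork, so the restrictions of the reaction space to the
subnetworks sum to the identity. Hence the stoichiometric subspace, the range of `Y ∘ Ia`, is the
(not necessarily direct) sum of those of the subnetworks, giving `s ≤ Σ sᵢ`. Incidence
independence is `n - ℓ = Σ (nᵢ - ℓᵢ)`, and subtracting the two yields `δ ≥ Σ δᵢ`.
-/

namespace LinearMap

theorem sum_eq_id_of_apply_eq_ite {R ι κ : Type*} [Semiring R] [Fintype κ] [DecidableEq κ]
    (part : ι → κ) (P : κ → (ι → R) →ₗ[R] (ι → R))
    (hP : ∀ i v j, P i v j = if part j = i then v j else 0) :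
    ∑ i, P i = id := by
  ext v j
  simp [hP]

variable {K V W : Type*} [DivisionRing K] [AddCommGroup V] [Module K V]
  [AddCommGroup W] [Module K W] [FiniteDimensional K W]

theorem finrank_range_finsetSum_le {η : Type*} (s : Finset η) (f : η → V →ₗ[K] W) :
    Module.finrank K (range (∑ d ∈ s, f d)) ≤ ∑ d ∈ s, Module.finrank K (range (f d)) := by
  have h := rank_finsetSum_le s f
  simp only [LinearMap.rank, ← Module.finrank_eq_rank] at h
  exact_mod_cast h

theorem finrank_range_le_sum_finrank_range_comp {η : Type*} [Fintype η]
    (f : V →ₗ[K] W) (R : η → V →ₗ[K] V) (hR : ∑ i, R i = id) :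
    Module.finrank K (range f) ≤ ∑ i, Module.finrank K (range (f ∘ₗ R i)) := by
  have hf : f = ∑ i, f ∘ₗ R i := by
    ext v
    rw [sum_apply]
    simp only [comp_apply]
    rw [← map_sum, ← sum_apply, hR, id_apply]
  calc Module.finrank K (range f) = Module.finrank K (range (∑ i, f ∘ₗ R i)) := by rw [← hf]
    _ ≤ _ := finrank_range_finsetSum_le _ _

end LinearMap

/-- If a decomposition of a CRN is incidence independent (`n - ℓ = Σ (n_i - ℓ_i)`, i.e.
`rank I_a = Σ rank I_{a,i}`), then `δ ≥ δ_1 + ⋯ + δ_p`, where the deficiency is expressed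
as `δ = rank I_a - rank N` (using `n - ℓ = rank I_a` and `s = rank N`). -/
theorem stmt_5 {m n r p : ℕ}
    (Ia : (Fin r → ℝ) →ₗ[ℝ] (Fin n → ℝ)) (Y : (Fin n → ℝ) →ₗ[ℝ] (Fin m → ℝ))
    (part : Fin r → Fin p)
    (R : Fin p → ((Fin r → ℝ) →ₗ[ℝ] (Fin r → ℝ)))
    (hR : ∀ i v j, R i v j = if part j = i then v j else 0)
    (hincid : (Module.finrank ℝ (LinearMap.range Ia) : ℤ)
      = ∑ i : Fin p, (Module.finrank ℝ (LinearMap.range (Ia ∘ₗ R i)) : ℤ)) :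
    ((Module.finrank ℝ (LinearMap.range Ia) : ℤ)
        - (Module.finrank ℝ (LinearMap.range (Y ∘ₗ Ia)) : ℤ))
      ≥ ∑ i : Fin p, ((Module.finrank ℝ (LinearMap.range (Ia ∘ₗ R i)) : ℤ)
        - (Module.finrank ℝ (LinearMap.range ((Y ∘ₗ Ia) ∘ₗ R i)) : ℤ)) := by
  have hs : (Module.finrank ℝ (LinearMap.range (Y ∘ₗ Ia)) : ℤ)
      ≤ ∑ i, (Module.finrank ℝ (LinearMap.range ((Y ∘ₗ Ia) ∘ₗ R i)) : ℤ) := by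
    exact_mod_cast LinearMap.finrank_range_le_sum_finrank_range_comp (Y ∘ₗ Ia) R
      (LinearMap.sum_eq_id_of_apply_eq_ite part R hR)
  rw [Finset.sum_sub_distrib]
  omega
end

section
/- For an incidence independent decomposition of a CRN into subnetworks N_1, ..., N_p (Im I_a = ⊕_i Im I_{a,i}), and any kinetics K, the set of complex balanced equilibria satisfies Z_+(N, K) = ⋂_i Z_+(N_i, K_i), i.e., I_a K(x) = 0 if and only if I_{a,i} K_i(x) = 0 for all i. -/
/-- For an incidence independent decomposition (`Im I_a` is the internal direct sum of the
`Im I_{a,i}`) and any kinetics `K`, `Z_+(N,K) = ⋂ Z_+(N_i,K_i)`: for positive `x`,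
`I_a K(x) = 0` iff `I_{a,i} K_i(x) = 0` for all `i`. -/
theorem stmt_6 {m n r p : ℕ}
    (Ia : (Fin r → ℝ) →ₗ[ℝ] (Fin n → ℝ)) (part : Fin r → Fin p)
    (R : Fin p → ((Fin r → ℝ) →ₗ[ℝ] (Fin r → ℝ)))
    (hR : ∀ i v j, R i v j = if part j = i then v j else 0)
    (hindep : iSupIndep (fun i => LinearMap.range (Ia ∘ₗ R i)))
    (hsum : (⨆ i, LinearMap.range (Ia ∘ₗ R i)) = LinearMap.range Ia)
    (K : (Fin m → ℝ) → (Fin r → ℝ)) (x : Fin m → ℝ) (hpos : ∀ i, 0 < x i) :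
    Ia (K x) = 0 ↔ ∀ i : Fin p, Ia (R i (K x)) = 0 := by
  have hdecomp : (∑ i : Fin p, R i (K x)) = K x := by
    funext j
    rw [Finset.sum_apply]
    simp only [hR]
    simp [Finset.sum_ite_eq]
  have hsplit : Ia (K x) = ∑ i : Fin p, Ia (R i (K x)) := by
    conv_lhs => rw [← hdecomp]
    rw [map_sum]
  constructor
  · intro h0 i
    have hmem : Ia (R i (K x)) ∈ LinearMap.range (Ia ∘ₗ R i) := ⟨K x, rfl⟩
    have hsum0 : Ia (R i (K x)) + ∑ j ∈ Finset.univ.erase i, Ia (R j (K x)) = 0 := by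
      rw [Finset.add_sum_erase Finset.univ (fun j => Ia (R j (K x))) (Finset.mem_univ i),
        ← hsplit, h0]
    have hneg : Ia (R i (K x)) = -∑ j ∈ Finset.univ.erase i, Ia (R j (K x)) :=
      eq_neg_of_add_eq_zero_left hsum0
    have hmem2 : Ia (R i (K x)) ∈ ⨆ j, ⨆ (_ : j ≠ i), LinearMap.range (Ia ∘ₗ R j) := by
      rw [hneg]
      refine Submodule.neg_mem _ (Submodule.sum_mem _ fun j hj => ?_)
      have hji : j ≠ i := Finset.ne_of_mem_erase hj
      exact Submodule.mem_iSup_of_mem j (Submodule.mem_iSup_of_mem hji ⟨K x, rfl⟩)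
    have hdisj := hindep i
    exact (Submodule.mem_bot ℝ).mp (hdisj.le_bot ⟨hmem, hmem2⟩)
  · intro h
    rw [hsplit]
    exact Finset.sum_eq_zero fun i _ => h i
end

section
/- Let I_a ∈ ℝ^{n×r} be the incidence matrix of a directed graph G on n vertices with r edges, where each vertex is incident to at least one edge. Then G is strongly connected on each connected component (weakly reversible) if and only if ker I_a contains a strictly positive vector b ∈ ℝ^r_{>0}. -/
section Aux

variable {n r : ℕ} (src tgt : Fin r → Fin n) (Ia : Matrix (Fin n) (Fin r) ℝ)

lemma aux_flip (a w : Fin n) (x : ℝ) : (if a = w then x else 0) = if w = a then x else 0 := by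
  by_cases h : a = w
  · simp [h]
  · simp [h, Ne.symm h]

/-- From a directed path, get a nonnegative vector whose image under `Ia` is `e_v - e_u`. -/
lemma aux_pathvec
    (hIa : ∀ v e, Ia v e = (if tgt e = v then 1 else 0) - (if src e = v then 1 else 0))
    {u v : Fin n} (h : Relation.ReflTransGen (fun a b => ∃ e, src e = a ∧ tgt e = b) u v) :
    ∃ b : Fin r → ℝ, (∀ e, 0 ≤ b e) ∧
      ∀ w, Ia.mulVec b w = (if w = v then 1 else 0) - (if w = u then 1 else 0) := by
  induction h with
  | refl =>
    refine ⟨0, fun e => le_refl 0, fun w => ?_⟩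
    simp [Matrix.mulVec, dotProduct]
  | tail _ step ih =>
    obtain ⟨b, hb0, hb⟩ := ih
    obtain ⟨f, hfs, hft⟩ := step
    refine ⟨b + fun e => if e = f then 1 else 0, fun e => ?_, fun w => ?_⟩
    · by_cases h : e = f
      · subst h
        have := hb0 e
        simp
        linarith
      · simpa [h] using hb0 e
    · have hadd : Ia.mulVec (b + fun e => if e = f then 1 else 0) w
        = Ia.mulVec b w + Ia.mulVec (fun e => if e = f then 1 else 0) w := by
        simp [Matrix.mulVec_add]
      have hδ : Ia.mulVec (fun e => if e = f then 1 else 0) w = Ia w f := by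
        simp [Matrix.mulVec, dotProduct, mul_ite]
      rw [hadd, hδ, hb, hIa, aux_flip (tgt f) w, aux_flip (src f) w, hfs, hft]
      ring

/-- Given a positive circulation, the target of each edge reaches its source. -/
lemma aux_cycle
    (hIa : ∀ v e, Ia v e = (if tgt e = v then 1 else 0) - (if src e = v then 1 else 0))
    (b : Fin r → ℝ) (hb : ∀ e, 0 < b e) (hker : Ia.mulVec b = 0) (e : Fin r) :
    Relation.ReflTransGen (fun a b => ∃ e, src e = a ∧ tgt e = b) (tgt e) (src e) := by
  classical
  set R : Fin n → Fin n → Prop := fun a b => ∃ e, src e = a ∧ tgt e = b with hR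
  by_contra hcon
  set S : Finset (Fin n) := Finset.univ.filter (fun w => Relation.ReflTransGen R (tgt e) w)
    with hS
  have hmemS : ∀ w, w ∈ S ↔ Relation.ReflTransGen R (tgt e) w := by
    intro w; simp [hS]
  have hclosed : ∀ f : Fin r, src f ∈ S → tgt f ∈ S := by
    intro f hf
    rw [hmemS] at hf ⊢
    exact hf.tail ⟨f, rfl, rfl⟩
  have hsum : ∑ v ∈ S, Ia.mulVec b v = 0 := by
    rw [hker]; simp
  have hswap : ∑ v ∈ S, Ia.mulVec b v
      = ∑ f, ((if tgt f ∈ S then (1:ℝ) else 0) - (if src f ∈ S then 1 else 0)) * b f := by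
    simp only [Matrix.mulVec, dotProduct]
    rw [Finset.sum_comm]
    refine Finset.sum_congr rfl fun f _ => ?_
    rw [← Finset.sum_mul]
    congr 1
    simp only [hIa]
    rw [Finset.sum_sub_distrib, Finset.sum_ite_eq, Finset.sum_ite_eq]
  have hnonneg : ∀ f ∈ Finset.univ, (0:ℝ) ≤
      ((if tgt f ∈ S then (1:ℝ) else 0) - (if src f ∈ S then 1 else 0)) * b f := by
    intro f _
    by_cases h1 : src f ∈ S
    · have h2 := hclosed f h1
      simp [h1, h2]
    · have := (hb f).le
      by_cases h2 : tgt f ∈ S <;> simp [h1, h2] <;> positivity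
  have hzero : ∀ f ∈ Finset.univ,
      ((if tgt f ∈ S then (1:ℝ) else 0) - (if src f ∈ S then 1 else 0)) * b f = 0 :=
    (Finset.sum_eq_zero_iff_of_nonneg hnonneg).mp (by rw [← hswap, hsum])
  have he := hzero e (Finset.mem_univ e)
  have hte : tgt e ∈ S := (hmemS _).mpr Relation.ReflTransGen.refl
  have hse : src e ∉ S := fun h => hcon ((hmemS _).mp h)
  rw [if_pos hte, if_neg hse] at he
  simp at he
  exact (hb e).ne' he

end Aux

/-- A digraph (with each vertex incident to at least one edge) is weakly reversible
(each connected component of the underlying undirected graph is strongly connected)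
iff the kernel of its incidence matrix contains a strictly positive vector. -/
theorem stmt_8 {n r : ℕ} (src tgt : Fin r → Fin n)
    (hinc : ∀ v : Fin n, ∃ e, src e = v ∨ tgt e = v)
    (Ia : Matrix (Fin n) (Fin r) ℝ)
    (hIa : ∀ v e, Ia v e = (if tgt e = v then 1 else 0) - (if src e = v then 1 else 0)) :
    (∀ u v : Fin n,
        Relation.ReflTransGen
          (fun a b => (∃ e, src e = a ∧ tgt e = b) ∨ (∃ e, src e = b ∧ tgt e = a)) u v →
        Relation.ReflTransGen (fun a b => ∃ e, src e = a ∧ tgt e = b) u v)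
      ↔ ∃ b : Fin r → ℝ, (∀ e, 0 < b e) ∧ Ia.mulVec b = 0 := by
  classical
  constructor
  · intro hrev
    have hc : ∀ e : Fin r, ∃ c : Fin r → ℝ,
        (∀ f, 0 ≤ c f) ∧ 1 ≤ c e ∧ ∀ w, Ia.mulVec c w = 0 := by
      intro e
      have hweak : Relation.ReflTransGen
          (fun a b => (∃ e, src e = a ∧ tgt e = b) ∨ (∃ e, src e = b ∧ tgt e = a))
          (tgt e) (src e) :=
        Relation.ReflTransGen.single (Or.inr ⟨e, rfl, rfl⟩)
      have hpath := hrev _ _ hweak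
      obtain ⟨b, hb0, hb⟩ := aux_pathvec src tgt Ia hIa hpath
      refine ⟨b + fun f => if f = e then 1 else 0, fun f => ?_, ?_, fun w => ?_⟩
      · by_cases h : f = e
        · subst h
          have := hb0 f
          simp
          linarith
        · simpa [h] using hb0 f
      · have := hb0 e; simp; linarith
      · have hadd : Ia.mulVec (b + fun f => if f = e then 1 else 0) w
          = Ia.mulVec b w + Ia.mulVec (fun f => if f = e then 1 else 0) w := by
          simp [Matrix.mulVec_add]
        have hδ : Ia.mulVec (fun f => if f = e then 1 else 0) w = Ia w e := by
          simp [Matrix.mulVec, dotProduct, mul_ite]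
        rw [hadd, hδ, hb, hIa, aux_flip (tgt e) w, aux_flip (src e) w]
        ring
    choose c hc0 hc1 hck using hc
    refine ⟨fun f => ∑ e, c e f, fun f => ?_, ?_⟩
    · refine Finset.sum_pos' (fun e _ => hc0 e f) ⟨f, Finset.mem_univ f, ?_⟩
      linarith [hc1 f]
    · funext w
      simp only [Matrix.mulVec, dotProduct, Finset.mul_sum, Pi.zero_apply]
      rw [Finset.sum_comm]
      exact Finset.sum_eq_zero fun e _ => by
        have := hck e w
        simpa [Matrix.mulVec, dotProduct] using this
  · rintro ⟨b, hb, hker⟩ u v hweak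
    induction hweak with
    | refl => exact Relation.ReflTransGen.refl
    | tail _ step ih =>
      rcases step with ⟨f, hfs, hft⟩ | ⟨f, hfs, hft⟩
      · exact ih.tail ⟨f, hfs, hft⟩
      · have := aux_cycle src tgt Ia hIa b hb hker f
        rw [hfs, hft] at this
        exact ih.trans this
end

section
/- Let S, S̃_1, ..., S̃_h be subspaces of ℝ^m with S̃ = Σ_j S̃_j, and let x* ∈ ℝ^m_{>0}. Suppose there is no nonzero v ∈ S whose sign vector is realized simultaneously by some w_j ∈ S̃_j^⊥ for every j, i.e. there is no nonzero v ∈ S such that for each j there exists w_j ∈ S̃_j^⊥ with sign(w_j) = sign(v). Then the set Z = { x ∈ ℝ^m_{>0} : ln(x) − ln(x*) ∈ S̃^⊥ } meets each coset x₀ + S (x₀ ∈ ℝ^m_{>0}) in at most one point. -/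
lemma sign_log_sub {a b : ℝ} (ha : 0 < a) (hb : 0 < b) :
    Real.sign (Real.log a - Real.log b) = Real.sign (a - b) := by
  rcases lt_trichotomy a b with hlt | heq | hgt
  · rw [Real.sign_of_neg (by linarith [Real.log_lt_log ha hlt]),
      Real.sign_of_neg (by linarith)]
  · simp [heq]
  · rw [Real.sign_of_pos (by linarith [Real.log_lt_log hb hgt]),
      Real.sign_of_pos (by linarith)]

/-- Monostationarity criterion: under the product sign condition (no nonzero `v ∈ S` whose
sign vector is simultaneously realized by some `w_j ∈ S̃_jᗮ` for every `j`), the set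
`Z = {x > 0 : ln x - ln x* ∈ S̃ᗮ}`, with `S̃ = S̃_1 + ⋯ + S̃_h`, meets each coset of `S`
in at most one point. -/
theorem stmt_18 {m h : ℕ} (S : Submodule ℝ (EuclideanSpace ℝ (Fin m)))
    (St : Fin h → Submodule ℝ (EuclideanSpace ℝ (Fin m)))
    (xstar : EuclideanSpace ℝ (Fin m)) (hxstar : ∀ i, 0 < xstar i)
    (hsign : ∀ v ∈ S, v ≠ 0 →
      ¬ ∃ w : Fin h → EuclideanSpace ℝ (Fin m),
        (∀ j, w j ∈ (St j)ᗮ) ∧ ∀ j i, Real.sign (w j i) = Real.sign (v i)) :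
    ∀ x x' : EuclideanSpace ℝ (Fin m),
      x ∈ {z : EuclideanSpace ℝ (Fin m) | (∀ i, 0 < z i) ∧
        (WithLp.toLp 2 (fun i => Real.log (z i) - Real.log (xstar i)) : EuclideanSpace ℝ (Fin m))
          ∈ (⨆ j, St j)ᗮ} →
      x' ∈ {z : EuclideanSpace ℝ (Fin m) | (∀ i, 0 < z i) ∧
        (WithLp.toLp 2 (fun i => Real.log (z i) - Real.log (xstar i)) : EuclideanSpace ℝ (Fin m))
          ∈ (⨆ j, St j)ᗮ} →
      x - x' ∈ S → x = x' := by
  rintro x x' ⟨hx, hxZ⟩ ⟨hx', hxZ'⟩ hS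
  by_contra hne
  have hvne : x - x' ≠ 0 := sub_ne_zero.mpr hne
  have hw : (WithLp.toLp 2 (fun i => Real.log (x i) - Real.log (xstar i)) -
      WithLp.toLp 2 (fun i => Real.log (x' i) - Real.log (xstar i)) : EuclideanSpace ℝ (Fin m))
      ∈ (⨆ j, St j)ᗮ := Submodule.sub_mem _ hxZ hxZ'
  refine hsign (x - x') hS hvne ⟨fun _ => (WithLp.toLp 2 (fun i => Real.log (x i) - Real.log (xstar i)) -
      WithLp.toLp 2 (fun i => Real.log (x' i) - Real.log (xstar i)) : EuclideanSpace ℝ (Fin m)),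
    fun j => Submodule.orthogonal_le (le_iSup St j) hw, fun j i => ?_⟩
  show Real.sign ((Real.log (x i) - Real.log (xstar i)) -
      (Real.log (x' i) - Real.log (xstar i))) = Real.sign ((x - x') i)
  have : (Real.log (x i) - Real.log (xstar i)) - (Real.log (x' i) - Real.log (xstar i))
      = Real.log (x i) - Real.log (x' i) := by ring
  rw [this]
  have h2 : (x - x') i = x i - x' i := rfl
  rw [h2, sign_log_sub (hx i) (hx' i)]
end
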